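/- arXiv:1205.3518 — 4 statements merged into one kernel-verified Lean document; each statement's English description precedes it below -/
import Mathlib

section
/- Let s be a positive integer and let B_1, …, B_s and W_1, …, W_s be random variables on a common probability space, each taking only finitely many real values, such that W_1, …, W_s are mutually independent and the tuple (W_1, …, W_s) is independent of the tuple (B_1, …, B_s). Define A_i = B_i + W_i for each i. Then the mutual information satisfies I((A_1, …, A_s); (B_1, …, B_s)) ≤ Σ_{i=1}^s I(A_i; B_i). -/
/-!
Writing `A = B + W`, the map `(a, b) ↦ (a - b, b)` is injective, so `H(A, B) = H(W, B)`, which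
the two independence hypotheses split as `∑ᵢ H(Wᵢ) + H(B)`; likewise `H(Aᵢ, Bᵢ) = H(Wᵢ) + H(Bᵢ)`.
Hence `I(A; B) = H(A) - ∑ᵢ H(Wᵢ)` and `I(Aᵢ; Bᵢ) = H(Aᵢ) - H(Wᵢ)`, and the claim reduces to the
subadditivity `H(A) ≤ ∑ᵢ H(Aᵢ)`: Gibbs' inequality for the law of `A` against the product of its
marginals, whose cross-entropy is exactly `∑ᵢ H(Aᵢ)`.
-/

open MeasureTheory ProbabilityTheory

noncomputable def probOf {Ω α : Type*} [MeasurableSpace Ω] (μ : Measure Ω) (X : Ω → α)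
    (x : α) : ℝ :=
  (μ (X ⁻¹' {x})).toReal

noncomputable def dEntropy {Ω α : Type*} [MeasurableSpace Ω] (μ : Measure Ω) (X : Ω → α) : ℝ :=
  ∑' x : α, -(probOf μ X x * Real.logb 2 (probOf μ X x))

noncomputable def dMI {Ω α β : Type*} [MeasurableSpace Ω] (μ : Measure Ω) (X : Ω → α)
    (Y : Ω → β) : ℝ :=
  dEntropy μ X + dEntropy μ Y - dEntropy μ (fun ω => (X ω, Y ω))

open Real in
lemma mul_sub_logb_le_sub_div_log {b p q : ℝ} (hb : 1 < b) (hp : 0 ≤ p) (hq : 0 ≤ q)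
    (hpq : p ≠ 0 → q ≠ 0) : p * (logb b q - logb b p) ≤ (q - p) / log b := by
  rcases hp.eq_or_lt with rfl | hp
  · simpa using div_nonneg hq (log_pos hb).le
  have hq : 0 < q := hq.lt_of_ne (hpq hp.ne').symm
  rw [← logb_div hq.ne' hp.ne', logb, mul_div_assoc', div_le_div_iff_of_pos_right (log_pos hb)]
  calc p * log (q / p) ≤ p * (q / p - 1) := by gcongr; exact log_le_sub_one_of_pos (by positivity)
    _ = q - p := by field_simp

open Real in
lemma Finset.sum_neg_mul_logb_le {ι : Type*} (S : Finset ι) {b : ℝ} (hb : 1 < b) {p q : ι → ℝ}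
    (hp : ∀ a ∈ S, 0 ≤ p a) (hq : ∀ a ∈ S, 0 ≤ q a) (hpq : ∀ a ∈ S, p a ≠ 0 → q a ≠ 0)
    (hsum : ∑ a ∈ S, q a ≤ ∑ a ∈ S, p a) :
    ∑ a ∈ S, -(p a * logb b (p a)) ≤ ∑ a ∈ S, p a * -logb b (q a) := by
  calc ∑ a ∈ S, -(p a * logb b (p a))
      ≤ ∑ a ∈ S, (p a * -logb b (q a) + (q a - p a) / log b) := Finset.sum_le_sum fun a ha => by
        linarith [mul_sub_logb_le_sub_div_log hb (hp a ha) (hq a ha) (hpq a ha)]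
    _ = ∑ a ∈ S, p a * -logb b (q a) + (∑ a ∈ S, q a - ∑ a ∈ S, p a) / log b := by
        rw [Finset.sum_add_distrib, ← Finset.sum_div, Finset.sum_sub_distrib]
    _ ≤ ∑ a ∈ S, p a * -logb b (q a) :=
        add_le_of_nonpos_right (div_nonpos_of_nonpos_of_nonneg (sub_nonpos.2 hsum) (log_pos hb).le)

lemma finite_range_add {Ω G : Type*} [Add G] {X Y : Ω → G} (hX : (Set.range X).Finite)
    (hY : (Set.range Y).Finite) : (Set.range fun ω => X ω + Y ω).Finite :=
  (hX.image2 (· + ·) hY).subset <| by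
    rintro _ ⟨ω, rfl⟩
    exact Set.mem_image2_of_mem ⟨ω, rfl⟩ ⟨ω, rfl⟩

section Probability

variable {Ω α β : Type*} [MeasurableSpace Ω] {μ : Measure Ω}

lemma probOf_nonneg (X : Ω → α) (a : α) : 0 ≤ probOf μ X a :=
  ENNReal.toReal_nonneg

lemma probOf_eq_zero_of_notMem_range {X : Ω → α} {a : α} (ha : a ∉ Set.range X) :
    probOf μ X a = 0 := by
  simp [probOf, Set.preimage_singleton_eq_empty.mpr ha]

lemma dEntropy_eq_sum {X : Ω → α} (S : Finset α) (hS : Set.range X ⊆ S) :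
    dEntropy μ X = ∑ a ∈ S, -(probOf μ X a * Real.logb 2 (probOf μ X a)) :=
  tsum_eq_sum fun a ha => by simp [probOf_eq_zero_of_notMem_range fun h => ha (hS h)]

lemma dEntropy_comp_of_injective (X : Ω → α) {f : α → β} (hf : f.Injective) :
    dEntropy μ (fun ω => f (X ω)) = dEntropy μ X := by
  have hpre (a : α) : probOf μ (fun ω => f (X ω)) (f a) = probOf μ X a := by
    have : (fun ω => f (X ω)) ⁻¹' {f a} = X ⁻¹' {a} := by ext; simp [hf.eq_iff]
    rw [probOf, this, probOf]
  refine (hf.tsum_eq fun b hb => ?_).symm.trans (tsum_congr fun a => by rw [hpre])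
  by_contra hbf
  have hzero : probOf μ (fun ω => f (X ω)) b = 0 :=
    probOf_eq_zero_of_notMem_range fun ⟨ω, hω⟩ => hbf ⟨X ω, hω⟩
  simp [hzero] at hb

lemma probOf_ne_zero_comp [IsFiniteMeasure μ] {X : Ω → α} {a : α} (ha : probOf μ X a ≠ 0)
    (f : α → β) :
    probOf μ (fun ω => f (X ω)) (f a) ≠ 0 := by
  refine (lt_of_lt_of_le ((probOf_nonneg X a).lt_of_ne' ha) ?_).ne'
  exact measureReal_mono fun ω (hω : X ω = a) => show f (X ω) = f a by rw [hω]

lemma dEntropy_add_prod_eq {G : Type*} [Add G] [IsLeftCancelAdd G] (X Y : Ω → G) :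
    dEntropy μ (fun ω => (X ω + Y ω, X ω)) = dEntropy μ (fun ω => (Y ω, X ω)) :=
  dEntropy_comp_of_injective (fun ω => (Y ω, X ω)) (f := fun p => (p.2 + p.1, p.2))
    fun ⟨y, x⟩ ⟨y', x'⟩ h => by
      obtain ⟨hsum, rfl : x = x'⟩ := Prod.mk.inj h
      exact congrArg (·, x) (add_left_cancel hsum)

variable [MeasurableSpace α] [MeasurableSingletonClass α] {X : Ω → α}

lemma probOf_comp_eq_sum [IsFiniteMeasure μ] [DecidableEq β] (hX : Measurable X)
    {S : Finset α} (hS : Set.range X ⊆ S) (f : α → β) (b : β) :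
    probOf μ (fun ω => f (X ω)) b = ∑ a ∈ S with f a = b, probOf μ X a := by
  have hpre : (fun ω => f (X ω)) ⁻¹' {b} = X ⁻¹' ↑{a ∈ S | f a = b} := by
    ext ω; simpa using fun _ => hS ⟨ω, rfl⟩
  rw [probOf, hpre, ← measureReal_def, ← sum_measureReal_preimage_singleton]
  · rfl
  · exact fun a _ => hX (measurableSet_singleton a)

lemma sum_probOf_eq_one [IsProbabilityMeasure μ] (hX : Measurable X) {S : Finset α}
    (hS : Set.range X ⊆ S) : ∑ a ∈ S, probOf μ X a = 1 := by
  classical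
  simpa [probOf] using (probOf_comp_eq_sum (μ := μ) hX hS (fun _ => ()) ()).symm

lemma sum_probOf_mul_comp [IsFiniteMeasure μ] [DecidableEq β] (hX : Measurable X)
    {S : Finset α} (hS : Set.range X ⊆ S) (f : α → β) (g : β → ℝ) :
    ∑ a ∈ S, probOf μ X a * g (f a) = ∑ b ∈ S.image f, probOf μ (fun ω => f (X ω)) b * g b := by
  refine (Finset.sum_image' _ fun a _ => ?_).symm
  rw [probOf_comp_eq_sum hX hS, Finset.sum_mul]
  exact Finset.sum_congr rfl fun a' ha' => by rw [(Finset.mem_filter.mp ha').2]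

lemma dEntropy_comp_eq_sum [IsFiniteMeasure μ] (hX : Measurable X) {S : Finset α}
    (hS : Set.range X ⊆ S) (f : α → β) :
    dEntropy μ (fun ω => f (X ω))
      = ∑ a ∈ S, probOf μ X a * -Real.logb 2 (probOf μ (fun ω => f (X ω)) (f a)) := by
  classical
  rw [sum_probOf_mul_comp hX hS f (fun b => -Real.logb 2 (probOf μ (fun ω => f (X ω)) b)),
    dEntropy_eq_sum (S.image f)]
  · simp only [mul_neg]
  · rintro _ ⟨ω, rfl⟩
    exact Finset.mem_image_of_mem f (hS ⟨ω, rfl⟩)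

end Probability

section Pair

variable {Ω α β : Type*} [MeasurableSpace Ω] {μ : Measure Ω}
  [MeasurableSpace α] [MeasurableSingletonClass α] [MeasurableSpace β] [MeasurableSingletonClass β]
  {X : Ω → α} {Y : Ω → β}

lemma probOf_prod_eq_mul_of_indepFun (h : IndepFun X Y μ) (a : α) (b : β) :
    probOf μ (fun ω => (X ω, Y ω)) (a, b) = probOf μ X a * probOf μ Y b := by
  have hpre : (fun ω => (X ω, Y ω)) ⁻¹' {(a, b)} = X ⁻¹' {a} ∩ Y ⁻¹' {b} := by
    ext; simp [Prod.ext_iff]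
  rw [probOf, hpre, h.measure_inter_preimage_eq_mul _ _ (measurableSet_singleton a)
    (measurableSet_singleton b), ENNReal.toReal_mul]
  rfl

lemma dEntropy_prod_eq_add_of_indepFun [IsFiniteMeasure μ] (hX : Measurable X)
    (hY : Measurable Y) (hXfin : (Set.range X).Finite) (hYfin : (Set.range Y).Finite)
    (h : IndepFun X Y μ) :
    dEntropy μ (fun ω => (X ω, Y ω)) = dEntropy μ X + dEntropy μ Y := by
  set S := hXfin.toFinset ×ˢ hYfin.toFinset
  have hS : Set.range (fun ω => (X ω, Y ω)) ⊆ S := by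
    rintro _ ⟨ω, rfl⟩
    simp [S]
  have hXY : Measurable (fun ω => (X ω, Y ω)) := hX.prodMk hY
  have hHX : dEntropy μ X = ∑ z ∈ S, probOf μ (fun ω => (X ω, Y ω)) z
      * -Real.logb 2 (probOf μ X z.1) := dEntropy_comp_eq_sum hXY hS Prod.fst
  have hHY : dEntropy μ Y = ∑ z ∈ S, probOf μ (fun ω => (X ω, Y ω)) z
      * -Real.logb 2 (probOf μ Y z.2) := dEntropy_comp_eq_sum hXY hS Prod.snd
  rw [hHX, hHY, ← Finset.sum_add_distrib, dEntropy_eq_sum S hS]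
  refine Finset.sum_congr rfl fun ⟨a, b⟩ _ => ?_
  by_cases hab : probOf μ (fun ω => (X ω, Y ω)) (a, b) = 0
  · simp [hab]
  have ha : probOf μ X a ≠ 0 := probOf_ne_zero_comp hab Prod.fst
  have hb : probOf μ Y b ≠ 0 := probOf_ne_zero_comp hab Prod.snd
  conv_lhs => rw [probOf_prod_eq_mul_of_indepFun h, Real.logb_mul ha hb,
    ← probOf_prod_eq_mul_of_indepFun h]
  ring

end Pair

section Pi

variable {Ω ι α : Type*} [Fintype ι] {X : ι → Ω → α}

lemma range_pi_subset_piFinset [DecidableEq ι] (hXfin : ∀ i, (Set.range (X i)).Finite) :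
    Set.range (fun ω i => X i ω) ⊆ Fintype.piFinset fun i => (hXfin i).toFinset := by
  rintro _ ⟨ω, rfl⟩
  simp

lemma finite_range_pi [DecidableEq ι] (hXfin : ∀ i, (Set.range (X i)).Finite) :
    (Set.range fun ω i => X i ω).Finite :=
  (Finset.finite_toSet _).subset (range_pi_subset_piFinset hXfin)

variable [MeasurableSpace Ω] {μ : Measure Ω} [MeasurableSpace α] [MeasurableSingletonClass α]

lemma probOf_pi_eq_prod_of_iIndepFun (h : iIndepFun X μ) (a : ι → α) :
    probOf μ (fun ω i => X i ω) a = ∏ i, probOf μ (X i) (a i) := by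
  have hpre : (fun ω i => X i ω) ⁻¹' {a} = ⋂ i ∈ Finset.univ, X i ⁻¹' {a i} := by
    ext; simp [funext_iff]
  rw [probOf, hpre, h.measure_inter_preimage_eq_mul Finset.univ
    (sets := fun i => {a i}) fun i _ => measurableSet_singleton (a i), ENNReal.toReal_prod]
  rfl

lemma sum_probOf_mul_neg_logb_prod [IsFiniteMeasure μ] (hX : ∀ i, Measurable (X i))
    {S : Finset (ι → α)} (hS : Set.range (fun ω i => X i ω) ⊆ S) :
    ∑ a ∈ S, probOf μ (fun ω i => X i ω) a * -Real.logb 2 (∏ i, probOf μ (X i) (a i))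
      = ∑ i, dEntropy μ (X i) := by
  have hXt : Measurable (fun ω i => X i ω) := measurable_pi_lambda _ hX
  have hHX (i : ι) : dEntropy μ (X i) = ∑ a ∈ S, probOf μ (fun ω i => X i ω) a
      * -Real.logb 2 (probOf μ (X i) (a i)) := dEntropy_comp_eq_sum hXt hS (fun a => a i)
  simp only [hHX]
  rw [Finset.sum_comm]
  refine Finset.sum_congr rfl fun a _ => ?_
  by_cases ha : probOf μ (fun ω i => X i ω) a = 0
  · simp [ha]
  rw [Real.logb_prod _ _ fun i _ => probOf_ne_zero_comp ha (fun a => a i),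
    ← Finset.sum_neg_distrib, Finset.mul_sum]

lemma dEntropy_pi_le_sum [IsProbabilityMeasure μ] (hX : ∀ i, Measurable (X i))
    (hXfin : ∀ i, (Set.range (X i)).Finite) :
    dEntropy μ (fun ω i => X i ω) ≤ ∑ i, dEntropy μ (X i) := by
  classical
  have hT (i : ι) : Set.range (X i) ⊆ (hXfin i).toFinset := by simp
  have hS := range_pi_subset_piFinset hXfin
  have hXt : Measurable (fun ω i => X i ω) := measurable_pi_lambda _ hX
  rw [← sum_probOf_mul_neg_logb_prod hX hS, dEntropy_eq_sum _ hS]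
  refine Finset.sum_neg_mul_logb_le _ one_lt_two (fun a _ => probOf_nonneg _ a)
    (fun a _ => Finset.prod_nonneg fun i _ => probOf_nonneg _ _)
    (fun a _ ha => Finset.prod_ne_zero_iff.mpr fun i _ => probOf_ne_zero_comp ha (fun a => a i))
    ?_
  rw [sum_probOf_eq_one hXt hS, ← Finset.prod_univ_sum,
    Finset.prod_congr rfl fun i _ => sum_probOf_eq_one (hX i) (hT i), Finset.prod_const_one]

lemma dEntropy_pi_eq_sum_of_iIndepFun [IsFiniteMeasure μ] (hX : ∀ i, Measurable (X i))
    (hXfin : ∀ i, (Set.range (X i)).Finite) (h : iIndepFun X μ) :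
    dEntropy μ (fun ω i => X i ω) = ∑ i, dEntropy μ (X i) := by
  classical
  have hS := range_pi_subset_piFinset hXfin
  rw [← sum_probOf_mul_neg_logb_prod hX hS, dEntropy_eq_sum _ hS]
  refine Finset.sum_congr rfl fun a _ => ?_
  rw [← probOf_pi_eq_prod_of_iIndepFun h, mul_neg]

end Pi

theorem mutualInfo_sum_le_of_indep_noise_general
    {Ω : Type*} [MeasurableSpace Ω] (μ : Measure Ω) [IsProbabilityMeasure μ]
    (s : ℕ) (B W : Fin s → Ω → ℝ)
    (hBmeas : ∀ i, Measurable (B i)) (hWmeas : ∀ i, Measurable (W i))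
    (hBfin : ∀ i, (Set.range (B i)).Finite) (hWfin : ∀ i, (Set.range (W i)).Finite)
    (hWindep : iIndepFun W μ)
    (hindep : IndepFun (fun ω => fun i => W i ω) (fun ω => fun i => B i ω) μ) :
    dMI μ (fun ω => fun i => B i ω + W i ω) (fun ω => fun i => B i ω) ≤
      ∑ i : Fin s, dMI μ (fun ω => B i ω + W i ω) (B i) := by
  have hsub : dEntropy μ (fun ω i => B i ω + W i ω) ≤ ∑ i, dEntropy μ (fun ω => B i ω + W i ω) :=
    dEntropy_pi_le_sum (fun i => (hBmeas i).add (hWmeas i))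
      fun i => finite_range_add (hBfin i) (hWfin i)
  have hW : dEntropy μ (fun ω i => W i ω) = ∑ i, dEntropy μ (W i) :=
    dEntropy_pi_eq_sum_of_iIndepFun hWmeas hWfin hWindep
  have hAB : dEntropy μ (fun ω => ((fun i => B i ω + W i ω), fun i => B i ω))
      = dEntropy μ (fun ω i => W i ω) + dEntropy μ (fun ω i => B i ω) :=
    (dEntropy_add_prod_eq (fun ω i => B i ω) (fun ω i => W i ω)).trans
      (dEntropy_prod_eq_add_of_indepFun (measurable_pi_lambda _ hWmeas)
        (measurable_pi_lambda _ hBmeas) (finite_range_pi hWfin) (finite_range_pi hBfin) hindep)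
  have hABi (i : Fin s) : dEntropy μ (fun ω => (B i ω + W i ω, B i ω))
      = dEntropy μ (W i) + dEntropy μ (B i) :=
    (dEntropy_add_prod_eq (B i) (W i)).trans
      (dEntropy_prod_eq_add_of_indepFun (hWmeas i) (hBmeas i) (hWfin i) (hBfin i)
        (hindep.comp (measurable_pi_apply i) (measurable_pi_apply i)))
  simp only [dMI, hAB, hABi, hW, Finset.sum_sub_distrib, Finset.sum_add_distrib]
  linarith

/-- **Information chain rule with linear observations** (discrete version of Lemma B.1):
if `Aᵢ = Bᵢ + Wᵢ` with `W₁, …, W_s` mutually independent and `(W₁, …, W_s)` independent of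
`(B₁, …, B_s)`, then `I((A₁,…,A_s); (B₁,…,B_s)) ≤ ∑ᵢ I(Aᵢ; Bᵢ)`. -/
theorem mutualInfo_sum_le_of_indep_noise
    {Ω : Type*} [MeasurableSpace Ω] (μ : Measure Ω) [IsProbabilityMeasure μ]
    (s : ℕ) (hs : 0 < s) (B W : Fin s → Ω → ℝ)
    (hBmeas : ∀ i, Measurable (B i)) (hWmeas : ∀ i, Measurable (W i))
    (hBfin : ∀ i, (Set.range (B i)).Finite) (hWfin : ∀ i, (Set.range (W i)).Finite)
    (hWindep : iIndepFun W μ)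
    (hindep : IndepFun (fun ω => fun i => W i ω) (fun ω => fun i => B i ω) μ) :
    dMI μ (fun ω => fun i => B i ω + W i ω) (fun ω => fun i => B i ω) ≤
      ∑ i : Fin s, dMI μ (fun ω => B i ω + W i ω) (B i) :=
  mutualInfo_sum_le_of_indep_noise_general μ s B W hBmeas hWmeas hBfin hWfin hWindep hindep
end

section
/- Let n ≥ 1 and let p = (p_1, …, p_n) be a probability vector on {1, …, n}; define b = Σ_{j=1}^n p_j log₂(n p_j) (with the convention 0·log 0 = 0). For each integer i ≥ 1 let S_i = { j : 2^i ≤ n·p_j < 2^{i+1} } and t_i = Σ_{j ∈ S_i} p_j. Then Σ_{i ≥ 1} i · t_i < b + 1. -/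
/-!
Swapping the two sums, `∑ᵢ i tᵢ = ∑ⱼ pⱼ kⱼ`, where `kⱼ` is the unique `i` with
`2^i ≤ n pⱼ < 2^{i+1}` (and `kⱼ = 0` if there is none, i.e. if `n pⱼ < 1`).
When `n pⱼ ≥ 1` we have `kⱼ ≤ log₂(n pⱼ)`; when `n pⱼ < 1` the term `pⱼ log₂(n pⱼ)` of `b` may be
negative, but `-x log x ≤ e⁻¹` bounds it below by `-e⁻¹ / (n log 2)`. Summing over the `n`
indices loses at most `e⁻¹ / log 2 < 1`.
-/

open Finset Real

lemma neg_mul_log_le_exp_neg_one {x : ℝ} (hx : 0 ≤ x) : -(x * log x) ≤ exp (-1) := by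
  rcases hx.eq_or_lt with rfl | hx
  · simpa using (exp_pos (-1)).le
  simpa [exp_log hx, mul_comm] using mul_exp_neg_le_exp_neg_one (-log x)

lemma exp_neg_one_div_log_two_lt_one : exp (-1) / log 2 < 1 := by
  rw [div_lt_one (log_pos one_lt_two)]
  linarith [exp_neg_one_lt_half, log_two_gt_d9]

abbrev InDyadicBucket (i : ℕ) (x : ℝ) : Prop := 2 ^ i ≤ x ∧ x < 2 ^ (i + 1)

lemma InDyadicBucket.eq {i k : ℕ} {x : ℝ} (hi : InDyadicBucket i x) (hk : InDyadicBucket k x) :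
    i = k := by
  have hik : i < k + 1 := (pow_lt_pow_iff_right₀ one_lt_two).1 (hi.1.trans_lt hk.2)
  have hki : k < i + 1 := (pow_lt_pow_iff_right₀ one_lt_two).1 (hk.1.trans_lt hi.2)
  omega

lemma InDyadicBucket.le_logb {i : ℕ} {x : ℝ} (hi : InDyadicBucket i x) : (i : ℝ) ≤ logb 2 x := by
  rw [le_logb_iff_rpow_le one_lt_two (by linarith [hi.1, pow_pos two_pos i (M₀ := ℝ)]),
    rpow_natCast]
  exact hi.1

/-- The index of the dyadic bucket containing `x`, or `0` if `x < 1`. -/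
noncomputable def dyadicLevel (x : ℝ) : ℝ := ∑' i : ℕ, if InDyadicBucket i x then (i : ℝ) else 0

lemma dyadicLevel_eq {i : ℕ} {x : ℝ} (hi : InDyadicBucket i x) : dyadicLevel x = i := by
  rw [dyadicLevel, tsum_eq_single i fun k hk => if_neg fun h => hk (h.eq hi), if_pos hi]

lemma dyadicLevel_eq_zero {x : ℝ} (h : ∀ i, ¬ InDyadicBucket i x) : dyadicLevel x = 0 := by
  simp [dyadicLevel, h]

lemma summable_dyadicLevel (x : ℝ) :
    Summable fun i : ℕ => if InDyadicBucket i x then (i : ℝ) else 0 := by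
  have hsupp : Function.support (fun i : ℕ => if InDyadicBucket i x then (i : ℝ) else 0)
      ⊆ {i | InDyadicBucket i x} := fun i hi => by_contra fun h => hi (if_neg h)
  have hunique : {i | InDyadicBucket i x}.Subsingleton := fun _ hi _ hk => hi.eq hk
  exact summable_of_hasFiniteSupport (hunique.anti hsupp).finite

lemma mul_dyadicLevel_le {x : ℝ} (hx : 0 ≤ x) :
    x * dyadicLevel x ≤ x * logb 2 x + exp (-1) / log 2 := by
  have hlog2 : 0 < log 2 := log_pos one_lt_two
  by_cases h : ∃ i, InDyadicBucket i x
  · obtain ⟨i, hi⟩ := h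
    rw [dyadicLevel_eq hi]
    have := mul_le_mul_of_nonneg_left hi.le_logb hx
    linarith [div_pos (exp_pos (-1)) hlog2]
  · rw [dyadicLevel_eq_zero (not_exists.1 h), mul_zero, logb, mul_div_assoc', ← add_div]
    exact div_nonneg (by linarith [neg_mul_log_le_exp_neg_one hx]) hlog2.le

lemma mul_dyadicLevel_mul_le {n p : ℝ} (hn : 0 < n) (hp : 0 ≤ p) :
    p * dyadicLevel (n * p) ≤ p * logb 2 (n * p) + exp (-1) / log 2 / n := by
  rw [← mul_le_mul_iff_of_pos_left hn, mul_add, mul_div_cancel₀ _ hn.ne', ← mul_assoc, ← mul_assoc]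
  exact mul_dyadicLevel_le (mul_nonneg hn.le hp)

lemma tsum_mul_sum_filter_inDyadicBucket {ι : Type*} [Fintype ι] (w f : ι → ℝ) :
    ∑' i : ℕ, (i : ℝ) * ∑ j ∈ univ.filter (fun j => InDyadicBucket i (f j)), w j
      = ∑ j, w j * dyadicLevel (f j) := by
  have hterm (i : ℕ) (j : ι) : (i : ℝ) * (if InDyadicBucket i (f j) then w j else 0)
      = w j * if InDyadicBucket i (f j) then (i : ℝ) else 0 := by
    split_ifs <;> ring
  simp only [sum_filter, mul_sum, hterm]
  rw [Summable.tsum_finsetSum fun j _ => (summable_dyadicLevel (f j)).mul_left (w j)]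
  simp only [dyadicLevel, tsum_mul_left]

theorem dyadic_bucket_bound_general (n : ℕ) (p : Fin n → ℝ)
    (hp : ∀ j, 0 ≤ p j) :
    ∑' i : ℕ, (i : ℝ) *
        (∑ j ∈ Finset.univ.filter
            (fun j => 2 ^ i ≤ (n : ℝ) * p j ∧ (n : ℝ) * p j < 2 ^ (i + 1)), p j)
      < (∑ j, p j * Real.logb 2 ((n : ℝ) * p j)) + 1 := by
  have hbucket (j : Fin n) :
      p j * dyadicLevel (n * p j) ≤ p j * logb 2 (n * p j) + exp (-1) / log 2 / n :=
    mul_dyadicLevel_mul_le (Nat.cast_pos.2 j.pos) (hp j)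
  rw [tsum_mul_sum_filter_inDyadicBucket]
  calc ∑ j, p j * dyadicLevel (n * p j)
      ≤ ∑ j, (p j * logb 2 (n * p j) + exp (-1) / log 2 / n) := sum_le_sum fun j _ => hbucket j
    _ ≤ ∑ j, p j * logb 2 (n * p j) + exp (-1) / log 2 := by
      rw [sum_add_distrib, sum_const, card_univ, Fintype.card_fin, nsmul_eq_mul,
        mul_div_left_comm]
      gcongr
      exact mul_le_of_le_one_right (by positivity) (div_self_le_one _)
    _ < ∑ j, p j * logb 2 (n * p j) + 1 := by gcongr; exact exp_neg_one_div_log_two_lt_one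

/-- Dyadic bucketing of a probability vector by its divergence from uniform: with
`b = ∑ⱼ pⱼ log₂(n pⱼ)`, `Sᵢ = {j : 2^i ≤ n pⱼ < 2^{i+1}}` and `tᵢ = ∑_{j ∈ Sᵢ} pⱼ`,
one has `∑_{i ≥ 1} i·tᵢ < b + 1`. -/
theorem dyadic_bucket_bound (n : ℕ) (hn : 1 ≤ n) (p : Fin n → ℝ)
    (hp : ∀ j, 0 ≤ p j) (hpsum : ∑ j, p j = 1) :
    ∑' i : ℕ, (i : ℝ) *
        (∑ j ∈ Finset.univ.filter
            (fun j => 2 ^ i ≤ (n : ℝ) * p j ∧ (n : ℝ) * p j < 2 ^ (i + 1)), p j)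
      < (∑ j, p j * Real.logb 2 ((n : ℝ) * p j)) + 1 :=
  dyadic_bucket_bound_general n p hp
end

section
/- Let (t_i)_{i ≥ 0} be a probability distribution on the nonnegative integers (t_i ≥ 0, Σ_{i≥0} t_i = 1). Then its Shannon entropy satisfies H(t) = Σ_{i ≥ 0} t_i log₂(1/t_i) ≤ Σ_{i ≥ 1} i·t_i + 3, where terms with t_i = 0 are interpreted as 0. -/
/-!
Termwise, `log x ≤ x - 1` at `x = 2⁻ⁱ / tᵢ` gives `tᵢ log₂(1/tᵢ) ≤ i tᵢ + 2⁻ⁱ / log 2`; summing,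
the weights `2⁻ⁱ` contribute only `2 / log 2 < 3` beyond the mean.
-/

open scoped ENNReal

open Real in
theorem Real.mul_log_inv_le_mul_log_inv_add_sub {t a : ℝ} (ht : 0 ≤ t) (ha : 0 < a) :
    t * log (1 / t) ≤ t * log (1 / a) + a - t := by
  rcases ht.eq_or_lt with rfl | ht
  · simpa using ha.le
  have hgap : log (1 / t) - log (1 / a) = log (a / t) := by
    rw [← log_div (by positivity) (by positivity)]
    field_simp
  have hlog : t * log (a / t) ≤ a - t := by
    calc t * log (a / t) ≤ t * (a / t - 1) :=
          mul_le_mul_of_nonneg_left (log_le_sub_one_of_pos (by positivity)) ht.le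
      _ = a - t := by field_simp
  nlinarith

open Real in
theorem Real.mul_logb_two_inv_le {t : ℝ} (ht : 0 ≤ t) (i : ℕ) :
    t * logb 2 (1 / t) ≤ i * t + (1 / 2) ^ i / log 2 := by
  have hlog2 : 0 < log 2 := log_pos one_lt_two
  have hgibbs := mul_log_inv_le_mul_log_inv_add_sub ht (pow_pos (one_half_pos (α := ℝ)) i)
  have hweight : log (1 / (1 / 2) ^ i) = i * log 2 := by simp [log_pow]
  rw [hweight] at hgibbs
  rw [logb, ← mul_div_assoc, div_le_iff₀ hlog2, add_mul, div_mul_cancel₀ _ hlog2.ne']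
  nlinarith

theorem two_div_log_two_le_three : 2 / Real.log 2 ≤ 3 := by
  rw [div_le_iff₀ (Real.log_pos one_lt_two)]
  linarith [Real.log_two_gt_d9]

theorem tsum_ofReal_geometric_two_div_log_two_le_three :
    ∑' i : ℕ, ENNReal.ofReal ((1 / 2) ^ i / Real.log 2) ≤ 3 := by
  rw [← ENNReal.ofReal_tsum_of_nonneg (fun i ↦ by positivity)
    (summable_geometric_two.div_const _), tsum_div_const, tsum_geometric_two]
  simpa using ENNReal.ofReal_le_ofReal two_div_log_two_le_three

theorem entropy_le_mean_add_three_general (t : ℕ → ℝ) (ht : ∀ i, 0 ≤ t i) :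
    ∑' i : ℕ, ENNReal.ofReal (t i * Real.logb 2 (1 / t i)) ≤
      (∑' i : ℕ, ENNReal.ofReal ((i : ℝ) * t i)) + 3 := by
  have hterm (i : ℕ) : ENNReal.ofReal (t i * Real.logb 2 (1 / t i)) ≤
      ENNReal.ofReal (i * t i) + ENNReal.ofReal ((1 / 2) ^ i / Real.log 2) := by
    rw [← ENNReal.ofReal_add (by positivity [ht i]) (by positivity)]
    exact ENNReal.ofReal_le_ofReal (Real.mul_logb_two_inv_le (ht i) i)
  calc ∑' i : ℕ, ENNReal.ofReal (t i * Real.logb 2 (1 / t i))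
      ≤ ∑' i : ℕ, (ENNReal.ofReal (i * t i) + ENNReal.ofReal ((1 / 2) ^ i / Real.log 2)) :=
        ENNReal.tsum_le_tsum hterm
    _ = (∑' i : ℕ, ENNReal.ofReal (i * t i)) +
        ∑' i : ℕ, ENNReal.ofReal ((1 / 2) ^ i / Real.log 2) := ENNReal.tsum_add
    _ ≤ (∑' i : ℕ, ENNReal.ofReal (i * t i)) + 3 := by
        gcongr
        exact tsum_ofReal_geometric_two_div_log_two_le_three

/-- For a probability distribution `(tᵢ)_{i ≥ 0}` on the nonnegative integers, the Shannon
entropy satisfies `H(t) = ∑ tᵢ log₂(1/tᵢ) ≤ ∑_{i ≥ 1} i·tᵢ + 3` (sums taken in `ℝ≥0∞`,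
so both sides are meaningful even when infinite; terms with `tᵢ = 0` are `0`). -/
theorem entropy_le_mean_add_three (t : ℕ → ℝ) (ht : ∀ i, 0 ≤ t i) (htsum : HasSum t 1) :
    ∑' i : ℕ, ENNReal.ofReal (t i * Real.logb 2 (1 / t i)) ≤
      (∑' i : ℕ, ENNReal.ofReal ((i : ℝ) * t i)) + 3 :=
  entropy_le_mean_add_three_general t ht
end

section
/- There is an absolute constant C > 0 such that for all integers m ≥ 4 and B ≥ 1, the total variation distance between the law of Binomial(m−1, 1/(2B)) and the law of 1 + Binomial(m−2, 1/(2B)) is at most C·√(B/m). In particular one may take the bound 4·√(B/(m−2)). -/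
/-- The probability mass function of the binomial distribution `Binomial(n, p)` at `k`. -/
noncomputable def binomPMF (n : ℕ) (p : ℝ) (k : ℕ) : ℝ :=
  (n.choose k : ℝ) * p ^ k * (1 - p) ^ (n - k)

/-- The pmf of `1 + Binomial(n, p)`, i.e. the pushforward of `Binomial(n, p)` under
`k ↦ k + 1`. -/
noncomputable def shiftedBinomPMF (n : ℕ) (p : ℝ) (k : ℕ) : ℝ :=
  match k with
  | 0 => 0
  | k + 1 => binomPMF n p k

lemma binomPMF_nonneg {n : ℕ} {p : ℝ} (hp0 : 0 ≤ p) (hp1 : p ≤ 1) (k : ℕ) :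
    0 ≤ binomPMF n p k := by
  have h1 : (0:ℝ) ≤ 1 - p := by linarith
  unfold binomPMF
  positivity

lemma binomPMF_eq_zero {n k : ℕ} (p : ℝ) (h : n < k) : binomPMF n p k = 0 := by
  unfold binomPMF
  rw [Nat.choose_eq_zero_of_lt h]
  simp

lemma binomPMF_sum (n : ℕ) (p : ℝ) :
    ∑ k ∈ Finset.range (n + 1), binomPMF n p k = 1 := by
  have h := add_pow p (1 - p) n
  simp only [add_sub_cancel, one_pow] at h
  have : ∑ k ∈ Finset.range (n + 1), binomPMF n p k
      = ∑ k ∈ Finset.range (n + 1), p ^ k * (1 - p) ^ (n - k) * (n.choose k : ℝ) := by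
    apply Finset.sum_congr rfl
    intro k _
    unfold binomPMF
    ring
  rw [this, ← h]

lemma binomPMF_sum_le (n : ℕ) {p : ℝ} (hp0 : 0 ≤ p) (hp1 : p ≤ 1) (M : ℕ) :
    ∑ k ∈ Finset.range M, binomPMF n p k ≤ 1 := by
  have h : ∑ k ∈ Finset.range M, binomPMF n p k ≤
      ∑ k ∈ Finset.range (max M (n+1)), binomPMF n p k := by
    apply Finset.sum_le_sum_of_subset_of_nonneg
    · exact Finset.range_subset_range.mpr (le_max_left _ _)
    · intro k _ _; exact binomPMF_nonneg hp0 hp1 k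
  have h2 : ∑ k ∈ Finset.range (max M (n+1)), binomPMF n p k = 1 := by
    rw [← Finset.sum_range_add_sum_Ico _ (le_max_right M (n+1)), binomPMF_sum]
    have : ∑ k ∈ Finset.Ico (n+1) (max M (n+1)), binomPMF n p k = 0 := by
      apply Finset.sum_eq_zero
      intro k hk
      exact binomPMF_eq_zero p (by have := (Finset.mem_Ico.mp hk).1; omega)
    rw [this]; ring
  linarith

lemma pascal (n : ℕ) (p : ℝ) (k : ℕ) :
    binomPMF (n + 1) p k = (1 - p) * binomPMF n p k + p * shiftedBinomPMF n p k := by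
  match k with
  | 0 =>
    simp [binomPMF, shiftedBinomPMF]
    ring
  | k + 1 =>
    show binomPMF (n+1) p (k+1) = (1-p) * binomPMF n p (k+1) + p * binomPMF n p k
    rcases le_or_gt (k+1) n with h | h
    · unfold binomPMF
      rw [Nat.choose_succ_succ]
      push_cast
      have e2 : n - k = (n - (k+1)) + 1 := by omega
      rw [e2]
      ring
    · rcases Nat.eq_or_lt_of_le h with h' | h'
      · -- k+1 = n+1, i.e. k = n
        have hk : k = n := by omega
        subst hk
        unfold binomPMF
        rw [Nat.choose_eq_zero_of_lt (Nat.lt_succ_self k)]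
        rw [Nat.choose_self, Nat.choose_self]
        simp
        ring
      · rw [binomPMF_eq_zero p (by omega), binomPMF_eq_zero p (by omega),
          binomPMF_eq_zero p (by omega)]
        ring

lemma ratio_id (n : ℕ) (p : ℝ) (k : ℕ) :
    ((k:ℝ) + 1) * (1 - p) * binomPMF n p (k + 1) = ((n:ℝ) - k) * p * binomPMF n p k := by
  rcases lt_or_ge k n with h | h
  · have hc : (n.choose (k+1) : ℝ) * ((k:ℝ)+1) = (n.choose k : ℝ) * ((n:ℝ) - k) := by
      have h3 := Nat.choose_succ_right_eq n k
      have h4 : ((n.choose (k+1) * (k+1) : ℕ) : ℝ) = ((n.choose k * (n - k) : ℕ) : ℝ) := by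
        rw [h3]
      push_cast [Nat.cast_sub h.le] at h4
      linarith
    have e1 : n - k = (n - (k+1)) + 1 := by omega
    unfold binomPMF
    rw [e1]
    linear_combination hc * (p^(k+1) * (1-p)^(n-(k+1)) * (1-p))
  · rcases Nat.eq_or_lt_of_le h with h' | h'
    · subst h'
      rw [binomPMF_eq_zero p (Nat.lt_succ_self n)]
      simp
    · rw [binomPMF_eq_zero p h', binomPMF_eq_zero p (by omega)]
      ring

lemma mono_up {n k : ℕ} {p : ℝ} (hp0 : 0 ≤ p) (hp : p ≤ 1/2)
    (h : ((k:ℝ) + 1) ≤ ((n:ℝ) + 1) * p) : binomPMF n p k ≤ binomPMF n p (k+1) := by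
  have hq : (0:ℝ) < 1 - p := by linarith
  have hb := binomPMF_nonneg (n := n) (p := p) hp0 (by linarith) k
  have hid := ratio_id n p k
  have expand : ((k:ℝ)+1)*(1-p) - ((n:ℝ)-(k:ℝ))*p = ((k:ℝ)+1) - ((n:ℝ)+1)*p := by ring
  have key : ((k:ℝ)+1)*(1-p) ≤ ((n:ℝ)-(k:ℝ))*p := by linarith
  have hpos : (0:ℝ) < ((k:ℝ)+1)*(1-p) := by positivity
  have h2 : ((k:ℝ)+1)*(1-p) * binomPMF n p k ≤ ((k:ℝ)+1)*(1-p) * binomPMF n p (k+1) := by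
    rw [hid]
    exact mul_le_mul_of_nonneg_right key hb
  exact le_of_mul_le_mul_left h2 hpos

lemma mono_down {n k : ℕ} {p : ℝ} (hp0 : 0 ≤ p) (hp : p ≤ 1/2)
    (h : ((n:ℝ) + 1) * p ≤ ((k:ℝ) + 1)) : binomPMF n p (k+1) ≤ binomPMF n p k := by
  have hq : (0:ℝ) < 1 - p := by linarith
  have hb := binomPMF_nonneg (n := n) (p := p) hp0 (by linarith) k
  have hid := ratio_id n p k
  have expand : ((k:ℝ)+1)*(1-p) - ((n:ℝ)-(k:ℝ))*p = ((k:ℝ)+1) - ((n:ℝ)+1)*p := by ring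
  have key : ((n:ℝ)-(k:ℝ))*p ≤ ((k:ℝ)+1)*(1-p) := by linarith
  have hpos : (0:ℝ) < ((k:ℝ)+1)*(1-p) := by positivity
  have h2 : ((k:ℝ)+1)*(1-p) * binomPMF n p (k+1) ≤ ((k:ℝ)+1)*(1-p) * binomPMF n p k := by
    rw [hid]
    exact mul_le_mul_of_nonneg_right key hb
  exact le_of_mul_le_mul_left h2 hpos

lemma step_up {n k : ℕ} {p D c : ℝ} (hp0 : 0 ≤ p) (hp : p ≤ 1/2)
    (hD : 0 < D) (hc : 0 ≤ c)
    (h1 : D ≤ ((k:ℝ)+1)*(1-p)) (h2 : ((k:ℝ)+1) - ((n:ℝ)+1)*p ≤ c) :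
    (1 - c/D) * binomPMF n p k ≤ binomPMF n p (k+1) := by
  have hq : (0:ℝ) < 1 - p := by linarith
  have hb := binomPMF_nonneg (n := n) (p := p) hp0 (by linarith) k
  have hid := ratio_id n p k
  have hpos : (0:ℝ) < ((k:ℝ)+1)*(1-p) := by positivity
  have expand : ((k:ℝ)+1)*(1-p) - ((n:ℝ)-(k:ℝ))*p = ((k:ℝ)+1) - ((n:ℝ)+1)*p := by ring
  have e1 : ((k:ℝ)+1)*(1-p) - ((n:ℝ)-(k:ℝ))*p ≤ c := by linarith
  have e2 : c ≤ c/D * (((k:ℝ)+1)*(1-p)) := by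
    rw [div_mul_eq_mul_div, le_div_iff₀ hD]
    exact mul_le_mul_of_nonneg_left h1 hc
  have id2 : (1 - c/D) * (((k:ℝ)+1)*(1-p))
      = ((k:ℝ)+1)*(1-p) - c/D * (((k:ℝ)+1)*(1-p)) := by ring
  have key : (1 - c/D) * (((k:ℝ)+1)*(1-p)) ≤ ((n:ℝ)-(k:ℝ))*p := by linarith
  have h3 : ((k:ℝ)+1)*(1-p) * ((1 - c/D) * binomPMF n p k)
      ≤ ((k:ℝ)+1)*(1-p) * binomPMF n p (k+1) := by
    rw [hid]
    calc ((k:ℝ)+1)*(1-p) * ((1 - c/D) * binomPMF n p k)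
        = ((1 - c/D) * (((k:ℝ)+1)*(1-p))) * binomPMF n p k := by ring
      _ ≤ (((n:ℝ)-(k:ℝ))*p) * binomPMF n p k := mul_le_mul_of_nonneg_right key hb
      _ = ((n:ℝ)-(k:ℝ))*p * binomPMF n p k := by ring
  exact le_of_mul_le_mul_left h3 hpos

lemma step_down {n k : ℕ} {p D c : ℝ} (hp0 : 0 ≤ p) (hp : p ≤ 1/2)
    (hD : 0 < D) (hc : 0 ≤ c)
    (h1 : D ≤ ((n:ℝ)-(k:ℝ))*p) (h2 : ((n:ℝ)+1)*p - ((k:ℝ)+1) ≤ c) :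
    (1 - c/D) * binomPMF n p (k+1) ≤ binomPMF n p k := by
  have hq : (0:ℝ) < 1 - p := by linarith
  have hb := binomPMF_nonneg (n := n) (p := p) hp0 (by linarith) (k+1)
  have hid := ratio_id n p k
  have hpos : (0:ℝ) < ((n:ℝ)-(k:ℝ))*p := lt_of_lt_of_le hD h1
  have expand : ((n:ℝ)-(k:ℝ))*p - ((k:ℝ)+1)*(1-p) = ((n:ℝ)+1)*p - ((k:ℝ)+1) := by ring
  have e1 : ((n:ℝ)-(k:ℝ))*p - ((k:ℝ)+1)*(1-p) ≤ c := by linarith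
  have e2 : c ≤ c/D * (((n:ℝ)-(k:ℝ))*p) := by
    rw [div_mul_eq_mul_div, le_div_iff₀ hD]
    exact mul_le_mul_of_nonneg_left h1 hc
  have id2 : (1 - c/D) * (((n:ℝ)-(k:ℝ))*p)
      = ((n:ℝ)-(k:ℝ))*p - c/D * (((n:ℝ)-(k:ℝ))*p) := by ring
  have key : (1 - c/D) * (((n:ℝ)-(k:ℝ))*p) ≤ ((k:ℝ)+1)*(1-p) := by linarith
  have h3 : ((n:ℝ)-(k:ℝ))*p * ((1 - c/D) * binomPMF n p (k+1))
      ≤ ((n:ℝ)-(k:ℝ))*p * binomPMF n p k := by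
    rw [← hid]
    calc ((n:ℝ)-(k:ℝ))*p * ((1 - c/D) * binomPMF n p (k+1))
        = ((1 - c/D) * (((n:ℝ)-(k:ℝ))*p)) * binomPMF n p (k+1) := by ring
      _ ≤ (((k:ℝ)+1)*(1-p)) * binomPMF n p (k+1) := mul_le_mul_of_nonneg_right key hb
      _ = ((k:ℝ)+1)*(1-p) * binomPMF n p (k+1) := by ring
  exact le_of_mul_le_mul_left h3 hpos

noncomputable def ddPMF (n : ℕ) (p : ℝ) (k : ℕ) : ℝ :=
  binomPMF n p k - shiftedBinomPMF n p k


lemma dd_eq (n : ℕ) (p : ℝ) (k : ℕ) :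
    ddPMF n p k = shiftedBinomPMF n p (k+1) - shiftedBinomPMF n p k := rfl

lemma tele_bound {n : ℕ} {p : ℝ} (hp0 : 0 ≤ p) (hp : p ≤ 1/2) :
    ∑ k ∈ Finset.range (n+2), |ddPMF n p k|
      ≤ 2 * binomPMF n p (Nat.floor (((n:ℝ)+1)*p)) := by
  have hp1 : p ≤ 1 := by linarith
  set K := Nat.floor (((n:ℝ)+1)*p) with hKdef
  have hnp : (0:ℝ) ≤ ((n:ℝ)+1)*p := by positivity
  have hK1 : (K:ℝ) ≤ ((n:ℝ)+1)*p := Nat.floor_le hnp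
  have hK2 : ((n:ℝ)+1)*p < (K:ℝ)+1 := Nat.lt_floor_add_one _
  have hKn : K + 1 ≤ n + 2 := by
    have : (K:ℝ) ≤ (n:ℝ)+1 := le_trans hK1 (by nlinarith [Nat.cast_nonneg (α := ℝ) n])
    exact_mod_cast by exact_mod_cast Nat.add_le_add_right (by exact_mod_cast this) 1
  have s1 : ∑ k ∈ Finset.range (K+1), |ddPMF n p k| = binomPMF n p K := by
    have hcong : ∀ k ∈ Finset.range (K+1),
        |ddPMF n p k| = shiftedBinomPMF n p (k+1) - shiftedBinomPMF n p k := by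
      intro k hk
      rw [← dd_eq]
      apply abs_of_nonneg
      match k with
      | 0 =>
        show 0 ≤ binomPMF n p 0 - 0
        simpa using binomPMF_nonneg hp0 hp1 (n := n) 0
      | j + 1 =>
        show 0 ≤ binomPMF n p (j+1) - binomPMF n p j
        have hj : j + 1 ≤ K := by
          have := Finset.mem_range.mp hk; omega
        have hjr : ((j:ℝ)+1) ≤ ((n:ℝ)+1)*p := by
          have : ((j:ℝ)+1) ≤ (K:ℝ) := by exact_mod_cast hj
          linarith
        linarith [mono_up hp0 hp hjr]
    rw [Finset.sum_congr rfl hcong, Finset.sum_range_sub (shiftedBinomPMF n p)]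
    show binomPMF n p K - 0 = binomPMF n p K
    ring
  have s2 : ∑ k ∈ Finset.Ico (K+1) (n+2), |ddPMF n p k|
      = binomPMF n p K - binomPMF n p (n+1) := by
    have hcong : ∀ k ∈ Finset.Ico (K+1) (n+2),
        |ddPMF n p k| = -(shiftedBinomPMF n p (k+1) - shiftedBinomPMF n p k) := by
      intro k hk
      rw [← dd_eq]
      apply abs_of_nonpos
      have hk1 : K + 1 ≤ k := (Finset.mem_Ico.mp hk).1
      match k, hk1 with
      | j + 1, hk1 =>
        show binomPMF n p (j+1) - binomPMF n p j ≤ 0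
        have hjr : ((n:ℝ)+1)*p ≤ (j:ℝ)+1 := by
          have : (K:ℝ)+1 ≤ (j:ℝ)+1 := by exact_mod_cast hk1
          linarith
        linarith [mono_down hp0 hp hjr]
    rw [Finset.sum_congr rfl hcong, Finset.sum_neg_distrib,
      Finset.sum_Ico_eq_sub _ hKn, Finset.sum_range_sub (shiftedBinomPMF n p),
      Finset.sum_range_sub (shiftedBinomPMF n p)]
    show -(binomPMF n p (n+1) - 0 - (binomPMF n p K - 0)) = _
    ring
  have hsplit := Finset.sum_range_add_sum_Ico (fun k => |ddPMF n p k|) hKn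
  have hb := binomPMF_nonneg hp0 hp1 (n := n) (n+1)
  linarith [hsplit, s1, s2]

lemma dd_abs_sum_le {n : ℕ} {p : ℝ} (hp0 : 0 ≤ p) (hp1 : p ≤ 1) :
    ∑ k ∈ Finset.range (n+2), |ddPMF n p k| ≤ 2 := by
  have h1 : ∀ k ∈ Finset.range (n+2),
      |ddPMF n p k| ≤ binomPMF n p k + shiftedBinomPMF n p k := by
    intro k _
    have h2 : 0 ≤ shiftedBinomPMF n p k := by
      match k with
      | 0 => exact le_refl 0
      | j + 1 => exact binomPMF_nonneg hp0 hp1 j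
    have h3 := binomPMF_nonneg hp0 hp1 (n := n) k
    rw [ddPMF, abs_le]
    constructor <;> linarith
  calc ∑ k ∈ Finset.range (n+2), |ddPMF n p k|
      ≤ ∑ k ∈ Finset.range (n+2), (binomPMF n p k + shiftedBinomPMF n p k) :=
        Finset.sum_le_sum h1
    _ = ∑ k ∈ Finset.range (n+2), binomPMF n p k
        + ∑ k ∈ Finset.range (n+2), shiftedBinomPMF n p k := Finset.sum_add_distrib
    _ ≤ 1 + 1 := by
        have e1 := binomPMF_sum_le n hp0 hp1 (n+2)
        have e2 : ∑ k ∈ Finset.range (n+2), shiftedBinomPMF n p k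
            = ∑ k ∈ Finset.range (n+1), binomPMF n p k := by
          rw [Finset.sum_range_succ' (shiftedBinomPMF n p) (n+1)]
          show (∑ k ∈ Finset.range (n+1), binomPMF n p k) + 0 = _
          ring
        rw [e2, binomPMF_sum]
        linarith
    _ = 2 := by norm_num

lemma two_le_sqrt {x : ℝ} (h : 4 ≤ x) : 2 ≤ Real.sqrt x := by
  have h2 : Real.sqrt 4 ≤ Real.sqrt x := Real.sqrt_le_sqrt h
  have h4 : Real.sqrt 4 = 2 := by
    rw [show (4:ℝ) = 2^2 by norm_num, Real.sqrt_sq (by norm_num : (0:ℝ) ≤ 2)]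
  linarith

lemma sqrt_le_half_self {x : ℝ} (h : 8 ≤ x) : Real.sqrt x ≤ x/2 := by
  have h0 : (0:ℝ) ≤ x := by linarith
  have hs2 : (Real.sqrt x)^2 = x := Real.sq_sqrt h0
  have h2 : 2 ≤ Real.sqrt x := two_le_sqrt (by linarith)
  nlinarith

lemma sqrt2_facts : 1 ≤ Real.sqrt 2 ∧ Real.sqrt 2 ≤ 3/2 := by
  have hs2 : (Real.sqrt 2)^2 = 2 := Real.sq_sqrt (by norm_num)
  have h0 : 0 ≤ Real.sqrt 2 := Real.sqrt_nonneg 2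
  constructor <;> nlinarith

lemma two_sqrt_two_le_sqrt {x : ℝ} (h : 8 ≤ x) : 2*Real.sqrt 2 ≤ Real.sqrt x := by
  have hs2 : (Real.sqrt 2)^2 = 2 := Real.sq_sqrt (by norm_num)
  have h0 : 0 ≤ Real.sqrt 2 := Real.sqrt_nonneg 2
  have hx2 : (Real.sqrt x)^2 = x := Real.sq_sqrt (by linarith)
  have hx0 : 0 ≤ Real.sqrt x := Real.sqrt_nonneg x
  nlinarith

lemma Abound_lemma {x s S : ℝ} (hx0 : 0 ≤ x) (hx : x ≤ s/2) (hs2 : s^2 = S)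
    (hs_ge2 : 2 ≤ s) : 3/4 ≤ 1 - (x*(x+1))/(2*S) := by
  have hS0 : 0 < S := by nlinarith
  have hsS : s ≤ S/2 := by nlinarith
  have hq : x*(x+1) ≤ S/2 := by nlinarith
  have hdiv : (x*(x+1))/(2*S) ≤ 1/4 := by
    rw [div_le_iff₀ (by positivity)]
    nlinarith
  linarith

lemma final_arith {b s r v : ℝ} (hb : 0 ≤ b) (hsr : 2*r ≤ s) (hr2 : r^2 = 2)
    (hr1 : 1 ≤ r) (hr_le : r ≤ 3/2) (h2u : s - 1 ≤ v)
    (hmain : v * ((3/4)*b) ≤ 1) : b * s ≤ 2*r := by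
  have e1 : b*(s-1) ≤ b*v := mul_le_mul_of_nonneg_left h2u hb
  have f1 : b * s ≤ 4/3 + b := by nlinarith
  have e2 : b*(2*r-1) ≤ b*(s-1) := mul_le_mul_of_nonneg_left (by linarith) hb
  have f2 : b*(2*r-1) ≤ 4/3 := by nlinarith
  have f3 : b ≤ 2*r - 4/3 := by nlinarith
  linarith

-- the quadratic cumulative-factor recursion step
lemma cum_step {S x b y z w : ℝ} (hS0 : 0 < S) (hx : 0 ≤ x) (hb : 0 ≤ b)
    (hIH : (1 - (x*(x+1))/(2*S)) * b ≤ y)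
    (hst : (1 - (x+1)/S) * y ≤ z)
    (hnn : 0 ≤ 1 - (x+1)/S)
    (hw : w = (1 - ((x+1)*((x+1)+1))/(2*S)) * b) : w ≤ z := by
  have halg : (1 - (x+1)/S) * (1 - (x*(x+1))/(2*S))
        - (1 - ((x+1)*((x+1)+1))/(2*S)) = x*(x+1)^2/(2*S^2) := by
    field_simp
    ring
  have hpos2 : 0 ≤ x*(x+1)^2/(2*S^2) := by positivity
  have halg2 : (1 - ((x+1)*((x+1)+1))/(2*S))
      ≤ (1 - (x+1)/S) * (1 - (x*(x+1))/(2*S)) := by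
    linarith [halg, hpos2]
  have h1 : w ≤ ((1 - (x+1)/S) * (1 - (x*(x+1))/(2*S))) * b := by
    rw [hw]
    exact mul_le_mul_of_nonneg_right halg2 hb
  have h2 : ((1 - (x+1)/S) * (1 - (x*(x+1))/(2*S))) * b
      ≤ (1 - (x+1)/S) * y := by
    rw [mul_assoc]
    exact mul_le_mul_of_nonneg_left hIH hnn
  linarith

lemma claim_up {n K u : ℕ} {p S s : ℝ} (hp0 : 0 < p) (hp : p ≤ 1/2)
    (hS : S = (n:ℝ)*p*(1-p)) (hS0 : 0 < S) (hs2 : s^2 = S) (hs_ge2 : 2 ≤ s)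
    (hu1 : (u:ℝ) ≤ s/2)
    (hK1 : (K:ℝ) ≤ ((n:ℝ)+1)*p) (hK2 : ((n:ℝ)+1)*p < (K:ℝ)+1) :
    ∀ j : ℕ, j ≤ u →
      (1 - ((j:ℝ)*((j:ℝ)+1))/(2*S)) * binomPMF n p K ≤ binomPMF n p (K + j) := by
  have hp1 : p ≤ 1 := by linarith
  have hq0 : (0:ℝ) < 1 - p := by linarith
  have hbK := binomPMF_nonneg (n := n) (p := p) hp0.le hp1 K
  have hsS : s ≤ S/2 := by nlinarith
  intro j
  induction j with
  | zero => intro _; norm_num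
  | succ j IH =>
    intro hj
    have IH' := IH (by omega)
    have hjr : (j:ℝ)+1 ≤ s/2 := by
      have : ((j:ℝ)+1) ≤ (u:ℝ) := by exact_mod_cast hj
      linarith
    have hj0 : (0:ℝ) ≤ (j:ℝ) := Nat.cast_nonneg j
    have hstep : (1 - ((j:ℝ)+1)/S) * binomPMF n p (K + j) ≤ binomPMF n p (K + j + 1) := by
      apply step_up hp0.le hp hS0 (by positivity)
      · push_cast
        have e1 : ((n:ℝ)+1)*p ≤ (K:ℝ)+(j:ℝ)+1 := by linarith
        have e2 := mul_le_mul_of_nonneg_right e1 hq0.le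
        have e3 : ((n:ℝ)+1)*p*(1-p) = S + p*(1-p) := by rw [hS]; ring
        have e4 : 0 ≤ p*(1-p) := mul_nonneg hp0.le hq0.le
        nlinarith [e2, e3, e4]
      · push_cast
        linarith
    have hnn : (0:ℝ) ≤ 1 - ((j:ℝ)+1)/S := by
      rw [sub_nonneg, div_le_one hS0]
      linarith
    have hidx : K + (j+1) = K + j + 1 := rfl
    rw [hidx]
    refine cum_step hS0 hj0 hbK IH' hstep hnn ?_
    push_cast
    ring_nf
  
lemma claim_down {n K u : ℕ} {p S s : ℝ} (hp0 : 0 < p) (hp : p ≤ 1/2)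
    (hS : S = (n:ℝ)*p*(1-p)) (hS0 : 0 < S) (hs2 : s^2 = S) (hs_ge2 : 2 ≤ s)
    (hu1 : (u:ℝ) ≤ s/2) (huK : u ≤ K)
    (hK1 : (K:ℝ) ≤ ((n:ℝ)+1)*p) (hK2 : ((n:ℝ)+1)*p < (K:ℝ)+1) :
    ∀ j : ℕ, j ≤ u →
      (1 - ((j:ℝ)*((j:ℝ)+1))/(2*S)) * binomPMF n p K ≤ binomPMF n p (K - j) := by
  have hp1 : p ≤ 1 := by linarith
  have hq0 : (0:ℝ) < 1 - p := by linarith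
  have hbK := binomPMF_nonneg (n := n) (p := p) hp0.le hp1 K
  have hsS : s ≤ S/2 := by nlinarith
  intro j
  induction j with
  | zero => intro _; norm_num
  | succ j IH =>
    intro hj
    have IH' := IH (by omega)
    have hjK : j + 1 ≤ K := le_trans hj huK
    have hjr : (j:ℝ)+1 ≤ s/2 := by
      have : ((j:ℝ)+1) ≤ (u:ℝ) := by exact_mod_cast hj
      linarith
    have hj0 : (0:ℝ) ≤ (j:ℝ) := Nat.cast_nonneg j
    have hcastK : ((K - (j+1) : ℕ):ℝ) = (K:ℝ) - (j:ℝ) - 1 := by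
      rw [Nat.cast_sub hjK]
      push_cast
      ring
    have hstep : (1 - ((j:ℝ)+1)/S) * binomPMF n p ((K - (j+1)) + 1)
        ≤ binomPMF n p (K - (j+1)) := by
      apply step_down hp0.le hp hS0 (by positivity)
      · rw [hcastK]
        have e1 : ((n:ℝ)+1)*(1-p) ≤ (n:ℝ) - ((K:ℝ)-(j:ℝ)-1) := by linarith
        have e2 := mul_le_mul_of_nonneg_right e1 hp0.le
        have e3 : ((n:ℝ)+1)*(1-p)*p = S + p*(1-p) := by rw [hS]; ring
        have e4 : 0 ≤ p*(1-p) := mul_nonneg hp0.le hq0.le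
        nlinarith [e2, e3, e4]
      · rw [hcastK]
        linarith
    have hidx : (K - (j+1)) + 1 = K - j := by omega
    rw [hidx] at hstep
    have hnn : (0:ℝ) ≤ 1 - ((j:ℝ)+1)/S := by
      rw [sub_nonneg, div_le_one hS0]
      linarith
    refine cum_step hS0 hj0 hbK IH' hstep hnn ?_
    push_cast
    ring_nf

lemma mode_bound {n : ℕ} {p : ℝ} (hp0 : 0 < p) (hp : p ≤ 1/2)
    (h8 : 8 ≤ (n:ℝ)*p*(1-p)) :
    binomPMF n p (Nat.floor (((n:ℝ)+1)*p))
      ≤ 2*Real.sqrt 2 / Real.sqrt ((n:ℝ)*p*(1-p)) := by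
  have hp1 : p ≤ 1 := by linarith
  have hq0 : (0:ℝ) < 1 - p := by linarith
  have hS0 : (0:ℝ) < (n:ℝ)*p*(1-p) := lt_of_lt_of_le (by norm_num) h8
  set s := Real.sqrt ((n:ℝ)*p*(1-p)) with hsdef
  have hs2 : s^2 = (n:ℝ)*p*(1-p) := Real.sq_sqrt hS0.le
  have hs0 : 0 < s := Real.sqrt_pos.mpr hS0
  have hs_ge2 : 2 ≤ s := two_le_sqrt (by linarith)
  have hsS : s ≤ ((n:ℝ)*p*(1-p))/2 := sqrt_le_half_self h8
  have hnp0 : (0:ℝ) ≤ (n:ℝ)*p := by positivity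
  have hSnp : (n:ℝ)*p*(1-p) ≤ (n:ℝ)*p := by nlinarith [mul_nonneg hnp0 hp0.le]
  have hnp8 : 8 ≤ (n:ℝ)*p := le_trans h8 hSnp
  set u := Nat.floor (s/2) with hudef
  have hu1 : (u:ℝ) ≤ s/2 := Nat.floor_le (by positivity)
  have hu2 : s/2 < (u:ℝ)+1 := Nat.lt_floor_add_one _
  set K := Nat.floor (((n:ℝ)+1)*p) with hKdef
  have hK1 : (K:ℝ) ≤ ((n:ℝ)+1)*p := Nat.floor_le (by positivity)
  have hK2 : ((n:ℝ)+1)*p < (K:ℝ)+1 := Nat.lt_floor_add_one _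
  have hbK := binomPMF_nonneg (n := n) (p := p) hp0.le hp1 K
  have huK : u ≤ K := by
    have enp : ((n:ℝ)+1)*p = (n:ℝ)*p + p := by ring
    have h1 : (u:ℝ) < (K:ℝ)+1 := by linarith
    have h2 : u < K + 1 := by exact_mod_cast h1
    omega
  have Abound : ∀ j : ℕ, j ≤ u → (3/4 : ℝ) ≤ 1 - ((j:ℝ)*((j:ℝ)+1))/(2*((n:ℝ)*p*(1-p))) := by
    intro j hj
    have hjr : (j:ℝ) ≤ s/2 := le_trans (by exact_mod_cast hj) hu1
    exact Abound_lemma (Nat.cast_nonneg j) hjr hs2 hs_ge2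
  have hwin : ∀ k ∈ Finset.Icc (K-u) (K+u),
      (3/4) * binomPMF n p K ≤ binomPMF n p k := by
    intro k hk
    obtain ⟨hk1, hk2⟩ := Finset.mem_Icc.mp hk
    rcases le_or_gt k K with h | h
    · have hj : K - k ≤ u := by omega
      have hkk : K - (K - k) = k := by omega
      have := le_trans (mul_le_mul_of_nonneg_right (Abound (K-k) hj) hbK)
        (claim_down hp0 hp rfl hS0 hs2 hs_ge2 hu1 huK hK1 hK2 (K-k) hj)
      rwa [hkk] at this
    · have hj : k - K ≤ u := by omega
      have hkk : K + (k - K) = k := by omega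
      have := le_trans (mul_le_mul_of_nonneg_right (Abound (k-K) hj) hbK)
        (claim_up hp0 hp rfl hS0 hs2 hs_ge2 hu1 hK1 hK2 (k-K) hj)
      rwa [hkk] at this
  have hcard : (Finset.Icc (K-u) (K+u)).card = 2*u+1 := by
    rw [Nat.card_Icc]
    omega
  have hsum1 : ((2*u+1 : ℕ):ℝ) * ((3/4) * binomPMF n p K)
      ≤ ∑ k ∈ Finset.Icc (K-u) (K+u), binomPMF n p k := by
    have h := Finset.card_nsmul_le_sum (Finset.Icc (K-u) (K+u))
      (fun k => binomPMF n p k) ((3/4) * binomPMF n p K) hwin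
    rw [hcard] at h
    simpa [nsmul_eq_mul] using h
  have hsum2 : ∑ k ∈ Finset.Icc (K-u) (K+u), binomPMF n p k ≤ 1 := by
    refine le_trans (Finset.sum_le_sum_of_subset_of_nonneg ?_ ?_)
      (binomPMF_sum_le n hp0.le hp1 (K+u+1))
    · intro x hx
      have := (Finset.mem_Icc.mp hx).2
      exact Finset.mem_range.mpr (by omega)
    · intro k _ _
      exact binomPMF_nonneg hp0.le hp1 k
  have hmain : (2*(u:ℝ)+1) * ((3/4) * binomPMF n p K) ≤ 1 := by
    have hc : ((2*u+1 : ℕ):ℝ) = 2*(u:ℝ)+1 := by push_cast; ring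
    rw [hc] at hsum1
    linarith
  have hr2 : (Real.sqrt 2)^2 = 2 := Real.sq_sqrt (by norm_num)
  rw [le_div_iff₀ hs0]
  exact final_arith hbK (two_sqrt_two_le_sqrt h8) hr2 sqrt2_facts.1 sqrt2_facts.2
    (by linarith) hmain

lemma le_two_sqrt_two {a : ℝ} (ha : 0 ≤ a) (h : a^2 ≤ 8) : a ≤ 2*Real.sqrt 2 := by
  have hr2 : (Real.sqrt 2)^2 = 2 := Real.sq_sqrt (by norm_num)
  have hr0 : 0 ≤ Real.sqrt 2 := Real.sqrt_nonneg 2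
  nlinarith

lemma tv_bound {n : ℕ} {p : ℝ} (hp0 : 0 < p) (hp : p ≤ 1/2) (hn : 1 ≤ n) :
    (1/2) * (∑' k : ℕ, |binomPMF (n+1) p k - shiftedBinomPMF n p k|)
      ≤ 2*Real.sqrt 2 / Real.sqrt ((n:ℝ)*p) := by
  have hp1 : p ≤ 1 := by linarith
  have hq0 : (0:ℝ) < 1 - p := by linarith
  have hn0 : (0:ℝ) < (n:ℝ) := by exact_mod_cast hn
  have hnp_pos : (0:ℝ) < (n:ℝ)*p := by positivity
  have hsnp_pos : (0:ℝ) < Real.sqrt ((n:ℝ)*p) := Real.sqrt_pos.mpr hnp_pos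
  -- rewrite the tsum as a finite sum
  have hzero : ∀ k ∉ Finset.range (n+2),
      |binomPMF (n+1) p k - shiftedBinomPMF n p k| = 0 := by
    intro k hk
    have hk2 : n + 2 ≤ k := by
      by_contra hcon
      exact hk (Finset.mem_range.mpr (by omega))
    match k, hk2 with
    | j + 1, hk2 =>
      show |binomPMF (n+1) p (j+1) - binomPMF n p j| = 0
      rw [binomPMF_eq_zero p (by omega), binomPMF_eq_zero p (by omega)]
      simp
  have htsum : (∑' k : ℕ, |binomPMF (n+1) p k - shiftedBinomPMF n p k|)
      = ∑ k ∈ Finset.range (n+2), |binomPMF (n+1) p k - shiftedBinomPMF n p k| :=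
    tsum_eq_sum hzero
  have habs : ∀ k, |binomPMF (n+1) p k - shiftedBinomPMF n p k| = (1-p) * |ddPMF n p k| := by
    intro k
    have hpas := pascal n p k
    have e : binomPMF (n+1) p k - shiftedBinomPMF n p k = (1-p) * ddPMF n p k := by
      rw [hpas, ddPMF]
      ring
    rw [e, abs_mul, abs_of_nonneg hq0.le]
  have hsum_eq : ∑ k ∈ Finset.range (n+2), |binomPMF (n+1) p k - shiftedBinomPMF n p k|
      = (1-p) * ∑ k ∈ Finset.range (n+2), |ddPMF n p k| := by
    rw [Finset.mul_sum]
    exact Finset.sum_congr rfl fun k _ => habs k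
  rw [htsum, hsum_eq]
  by_cases h8 : 8 ≤ (n:ℝ)*p*(1-p)
  · -- main case
    have hb := tele_bound (n := n) hp0.le hp
    have hm := mode_bound hp0 hp h8
    have hbK := binomPMF_nonneg (n := n) (p := p) hp0.le hp1 (Nat.floor (((n:ℝ)+1)*p))
    have hS0 : (0:ℝ) < (n:ℝ)*p*(1-p) := lt_of_lt_of_le (by norm_num) h8
    have hsS_pos : (0:ℝ) < Real.sqrt ((n:ℝ)*p*(1-p)) := Real.sqrt_pos.mpr hS0
    have key : (1-p) * (2*Real.sqrt 2 / Real.sqrt ((n:ℝ)*p*(1-p)))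
        ≤ 2*Real.sqrt 2 / Real.sqrt ((n:ℝ)*p) := by
      have e : (1-p) * (2*Real.sqrt 2 / Real.sqrt ((n:ℝ)*p*(1-p)))
          = ((1-p) * (2*Real.sqrt 2)) / Real.sqrt ((n:ℝ)*p*(1-p)) := by ring
      rw [e, div_le_div_iff₀ hsS_pos hsnp_pos]
      rw [Real.sqrt_mul hnp_pos.le (1-p)]
      have hqs : (1-p) ≤ Real.sqrt (1-p) := by
        have ht2 := Real.sq_sqrt hq0.le
        have ht0 := Real.sqrt_nonneg (1-p)
        have ht1 : Real.sqrt (1-p) ≤ 1 := by nlinarith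
        nlinarith [mul_nonneg ht0 (sub_nonneg.mpr ht1)]
      have hfac : (0:ℝ) ≤ 2*Real.sqrt 2 * Real.sqrt ((n:ℝ)*p) := by positivity
      nlinarith [mul_le_mul_of_nonneg_left hqs hfac]
    calc (1/2) * ((1-p) * ∑ k ∈ Finset.range (n+2), |ddPMF n p k|)
        ≤ (1/2) * ((1-p) * (2 * binomPMF n p (Nat.floor (((n:ℝ)+1)*p)))) := by
          apply mul_le_mul_of_nonneg_left _ (by norm_num)
          exact mul_le_mul_of_nonneg_left hb hq0.le
      _ = (1-p) * binomPMF n p (Nat.floor (((n:ℝ)+1)*p)) := by ring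
      _ ≤ (1-p) * (2*Real.sqrt 2 / Real.sqrt ((n:ℝ)*p*(1-p))) :=
          mul_le_mul_of_nonneg_left hm hq0.le
      _ ≤ 2*Real.sqrt 2 / Real.sqrt ((n:ℝ)*p) := key
  · -- small-variance case
    push_neg at h8
    have hb := dd_abs_sum_le (n := n) hp0.le hp1
    have step1 : (1/2) * ((1-p) * ∑ k ∈ Finset.range (n+2), |ddPMF n p k|) ≤ 1-p := by
      have habs_nn : 0 ≤ ∑ k ∈ Finset.range (n+2), |ddPMF n p k| :=
        Finset.sum_nonneg fun k _ => abs_nonneg _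
      nlinarith [mul_le_mul_of_nonneg_left hb hq0.le]
    have step2 : (1-p) ≤ 2*Real.sqrt 2 / Real.sqrt ((n:ℝ)*p) := by
      rw [le_div_iff₀ hsnp_pos]
      apply le_two_sqrt_two (by positivity)
      have hsq : (Real.sqrt ((n:ℝ)*p))^2 = (n:ℝ)*p := Real.sq_sqrt hnp_pos.le
      have e : ((1-p) * Real.sqrt ((n:ℝ)*p))^2 = (1-p)^2 * ((n:ℝ)*p) := by
        rw [mul_pow, hsq]
      rw [e]
      nlinarith [hnp_pos]
    linarith

lemma sqrt_combo {x y : ℝ} (hx : 0 < x) (hy : 0 < y) :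
    2*Real.sqrt 2 / Real.sqrt (x/(2*y)) = 4*Real.sqrt (y/x) := by
  have h1 : (0:ℝ) < x/(2*y) := by positivity
  have h2 : (0:ℝ) ≤ y/x := by positivity
  have ha : (0:ℝ) ≤ 2*Real.sqrt 2 / Real.sqrt (x/(2*y)) := by positivity
  have hb : (0:ℝ) ≤ 4*Real.sqrt (y/x) := by positivity
  have hsq : (2*Real.sqrt 2 / Real.sqrt (x/(2*y)))^2 = (4*Real.sqrt (y/x))^2 := by
    rw [div_pow, mul_pow, mul_pow, Real.sq_sqrt h1.le, Real.sq_sqrt (by norm_num : (0:ℝ) ≤ 2),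
      Real.sq_sqrt h2]
    field_simp
    ring
  have := congrArg Real.sqrt hsq
  rwa [Real.sqrt_sq ha, Real.sqrt_sq hb] at this


/-- There is an absolute constant `C > 0` such that for all integers `m ≥ 4` and `B ≥ 1`,
`D_TV(Binomial(m-1, 1/(2B)), 1 + Binomial(m-2, 1/(2B))) ≤ C·√(B/m)`; in particular the
bound `4·√(B/(m-2))` holds, where `D_TV(α, β) = (1/2)·∑_ω |α(ω) - β(ω)|`. -/
theorem binomial_shift_tv_bound :
    ∃ C : ℝ, 0 < C ∧ ∀ m B : ℕ, 4 ≤ m → 1 ≤ B →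
      (1 / 2) * (∑' k : ℕ,
          |binomPMF (m - 1) (1 / (2 * B)) k - shiftedBinomPMF (m - 2) (1 / (2 * B)) k|)
        ≤ C * Real.sqrt ((B : ℝ) / m) ∧
      (1 / 2) * (∑' k : ℕ,
          |binomPMF (m - 1) (1 / (2 * B)) k - shiftedBinomPMF (m - 2) (1 / (2 * B)) k|)
        ≤ 4 * Real.sqrt ((B : ℝ) / ((m : ℝ) - 2)) := by
  refine ⟨8, by norm_num, fun m B hm hB => ?_⟩
  have hB1 : (1:ℝ) ≤ (B:ℝ) := by exact_mod_cast hB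
  have hB0 : (0:ℝ) < (B:ℝ) := by linarith
  have hm4 : (4:ℝ) ≤ (m:ℝ) := by exact_mod_cast hm
  have hm0 : (0:ℝ) < (m:ℝ) := by linarith
  have hm2 : (0:ℝ) < (m:ℝ) - 2 := by linarith
  have hp0 : (0:ℝ) < 1/(2*(B:ℝ)) := by positivity
  have hp12 : 1/(2*(B:ℝ)) ≤ 1/2 := by
    rw [div_le_div_iff₀ (by positivity) (by norm_num)]
    linarith
  have hmn : m - 1 = (m - 2) + 1 := by omega
  have hn1 : 1 ≤ m - 2 := by omega
  have hcast : ((m - 2 : ℕ) : ℝ) = (m:ℝ) - 2 := by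
    have h2 : (2:ℕ) ≤ m := by omega
    push_cast [Nat.cast_sub h2]
    ring
  have htv := tv_bound (n := m-2) (p := 1/(2*(B:ℝ))) hp0 hp12 hn1
  rw [hmn]
  have key2 : 2*Real.sqrt 2 / Real.sqrt (((m-2 : ℕ):ℝ) * (1/(2*(B:ℝ))))
      = 4*Real.sqrt ((B:ℝ)/((m:ℝ)-2)) := by
    have e : ((m-2:ℕ):ℝ) * (1/(2*(B:ℝ))) = ((m:ℝ)-2)/(2*(B:ℝ)) := by
      rw [hcast]; ring
    rw [e, sqrt_combo hm2 hB0]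
  have h2 := le_trans htv (le_of_eq key2)
  have hcomp : 4*Real.sqrt ((B:ℝ)/((m:ℝ)-2)) ≤ 8*Real.sqrt ((B:ℝ)/(m:ℝ)) := by
    have hle : (B:ℝ)/((m:ℝ)-2) ≤ 4*((B:ℝ)/(m:ℝ)) := by
      rw [show 4*((B:ℝ)/(m:ℝ)) = (4*(B:ℝ))/(m:ℝ) by ring, div_le_div_iff₀ hm2 hm0]
      nlinarith
    have h4 : Real.sqrt (4*((B:ℝ)/(m:ℝ))) = 2*Real.sqrt ((B:ℝ)/(m:ℝ)) := by
      rw [show (4:ℝ) = 2^2 by norm_num, Real.sqrt_mul (by positivity) ((B:ℝ)/(m:ℝ)),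
        Real.sqrt_sq (by norm_num : (0:ℝ) ≤ 2)]
    have hmono := Real.sqrt_le_sqrt hle
    rw [h4] at hmono
    linarith
  exact ⟨le_trans h2 hcomp, h2⟩
end
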